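/- arXiv:1307.0733 — 2 statements merged into one kernel-verified Lean document; each statement's English description precedes it below -/
import Mathlib

section
/- Let F be a field of characteristic p > 0 and let A be an algebra over F. Then P_n(ℤ)/(P_n(ℤ) ∩ Id(A,ℤ)) is a finite-dimensional vector space over 𝔽_p = ℤ/pℤ, and for every n ≥ 1, dim_F P_n(F)/(P_n(F) ∩ Id(A,F)) ≤ dim_{𝔽_p} P_n(ℤ)/(P_n(ℤ) ∩ Id(A,ℤ)). Moreover, if F = ℤ/pℤ then equality holds. -/
/-- Left-normed product `v 0 * v 1 * ⋯ * v n` of a nonempty family in a (possibly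
non-unital) multiplicative structure. -/
def mprod {A : Type*} [Mul A] : {n : ℕ} → (Fin (n + 1) → A) → A
  | 0, v => v 0
  | _ + 1, v => mprod (fun i => v i.castSucc) * v (Fin.last _)

/-- The group `P_{n+1}(ℤ)` of multilinear polynomials with integer coefficients in the
variables `x_1, …, x_{n+1}`: the free abelian group on the monomials
`x_{σ(1)} ⋯ x_{σ(n+1)}`, `σ ∈ S_{n+1}`. -/
abbrev PZ (n : ℕ) : Type := Equiv.Perm (Fin (n + 1)) →₀ ℤ

/-- Evaluation of a multilinear integer polynomial at the tuple `v` in a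
(not necessarily unital) ring `A`, as a `ℤ`-linear map. -/
noncomputable def evalZ (A : Type*) [NonUnitalRing A] {n : ℕ} (v : Fin (n + 1) → A) :
    PZ n →ₗ[ℤ] A :=
  Finsupp.lift A ℤ (Equiv.Perm (Fin (n + 1))) (fun σ => mprod (fun i => v (σ i)))

/-- `P_{n+1}(ℤ) ∩ Id(A, ℤ)`: the multilinear polynomial identities of `A`
with integer coefficients. -/
noncomputable def IdZ (A : Type*) [NonUnitalRing A] (n : ℕ) : AddSubgroup (PZ n) where
  carrier := {f | ∀ v : Fin (n + 1) → A, evalZ A v f = 0}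
  zero_mem' := fun v => map_zero _
  add_mem' := fun hf hg v => by rw [map_add, hf v, hg v, add_zero]
  neg_mem' := fun hf v => by rw [map_neg, hf v, neg_zero]

/-- The space `P_{n+1}(F)` of multilinear polynomials with coefficients in `F`. -/
abbrev PF (F : Type*) [Field F] (n : ℕ) := Equiv.Perm (Fin (n + 1)) →₀ F

/-- Evaluation of a multilinear polynomial over `F` in an `F`-algebra `B`
(possibly non-unital), as an `F`-linear map. -/
noncomputable def evalF (F : Type*) [Field F] {B : Type*} [NonUnitalRing B] [Module F B]
    {n : ℕ} (v : Fin (n + 1) → B) : PF F n →ₗ[F] B :=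
  Finsupp.lift B F (Equiv.Perm (Fin (n + 1))) (fun σ => mprod (fun i => v (σ i)))

/-- `P_{n+1}(F) ∩ Id(B, F)`: the multilinear polynomial identities of `B`
with coefficients in `F`. -/
noncomputable def IdF (F : Type*) [Field F] (B : Type*) [NonUnitalRing B] [Module F B]
    (n : ℕ) : Submodule F (PF F n) where
  carrier := {f | ∀ v : Fin (n + 1) → B, evalF F v f = 0}
  zero_mem' := fun v => map_zero _
  add_mem' := fun hf hg v => by rw [map_add, hf v, hg v, add_zero]
  smul_mem' := fun c f hf v => by rw [map_smul, hf v, smul_zero]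

open Module Submodule

/-- The family of monomial functions `v ↦ x_{σ(1)} ⋯ x_{σ(n+1)}` evaluated at `v`. -/
private def Wfam {B : Type*} [Mul B] (n : ℕ) :
    Equiv.Perm (Fin (n + 1)) → ((Fin (n + 1) → B) → B) :=
  fun σ v => mprod fun i => v (σ i)

private lemma evalF_eq_lc {F : Type*} [Field F] {B : Type*} [NonUnitalRing B] [Module F B]
    {n : ℕ} (v : Fin (n + 1) → B) (f : PF F n) :
    evalF F v f = Finsupp.linearCombination F (Wfam n) f v := by
  rw [evalF, Finsupp.lift_apply, Finsupp.linearCombination_apply, Finsupp.sum, Finsupp.sum,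
    Finset.sum_apply]
  rfl

private lemma IdF_eq_ker {F : Type*} [Field F] (B : Type*) [NonUnitalRing B] [Module F B]
    (n : ℕ) :
    IdF F B n = LinearMap.ker (Finsupp.linearCombination F (Wfam (B := B) n)) := by
  ext f
  show (∀ v : Fin (n + 1) → B, evalF F v f = 0) ↔ _
  rw [LinearMap.mem_ker]
  constructor
  · intro hf
    funext v
    exact (evalF_eq_lc v f).symm.trans (hf v)
  · intro hf v
    rw [evalF_eq_lc, hf]
    rfl

private lemma finrank_quot_IdF {F : Type*} [Field F] (B : Type*) [NonUnitalRing B] [Module F B]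
    (n : ℕ) :
    finrank F (PF F n ⧸ IdF F B n) = finrank F (span F (Set.range (Wfam (B := B) n))) := by
  rw [IdF_eq_ker (F := F) B n, ← Finsupp.range_linearCombination]
  exact (LinearMap.quotKerEquivRange _).finrank_eq

private lemma finrank_span_le_span {K F M : Type*} [Field K] [Field F] [AddCommGroup M]
    [Module K M] [Module F M] [Algebra K F] [IsScalarTower K F M]
    {s : Set M} (hs : s.Finite) :
    finrank F (span F s) ≤ finrank K (span K s) := by
  classical
  obtain ⟨b, hbs, hspan, hli⟩ := exists_linearIndependent F s
  haveI : Fintype b := (hs.subset hbs).fintype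
  have h1 : finrank F (span F s) = b.toFinset.card := by
    rw [← hspan, finrank_span_set_eq_card hli]
  have hinj : Function.Injective fun r : K => r • (1 : F) := by
    have h : (fun r : K => r • (1 : F)) = ⇑(algebraMap K F) :=
      funext fun r => (Algebra.algebraMap_eq_smul_one r).symm
    rw [h]
    exact (algebraMap K F).injective
  have hliK : LinearIndependent K ((↑) : b → M) := hli.restrict_scalars hinj
  have h2 : finrank K (span K b) = b.toFinset.card := finrank_span_set_eq_card hliK
  haveI : FiniteDimensional K (span K s) := FiniteDimensional.span_of_finite K hs
  have h3 := Submodule.finrank_mono (R := K) (span_mono hbs)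
  omega

private lemma evalF_mapRange {p : ℕ} [Fact p.Prime] {A : Type*} [NonUnitalRing A]
    [Module (ZMod p) A] {n : ℕ} (v : Fin (n + 1) → A) (f : PZ n) :
    evalF (ZMod p) v (f.mapRange Int.cast Int.cast_zero) = evalZ A v f := by
  rw [evalF, evalZ, Finsupp.lift_apply, Finsupp.lift_apply,
    Finsupp.sum_mapRange_index (by simp)]
  exact Finsupp.sum_congr fun σ _ => Int.cast_smul_eq_zsmul (ZMod p) _ _

private noncomputable def redHom (p n : ℕ) [Fact p.Prime] : PZ n →+ PF (ZMod p) n :=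
  Finsupp.mapRange.addMonoidHom (Int.castAddHom (ZMod p))

private lemma redHom_apply (p n : ℕ) [Fact p.Prime] (f : PZ n) :
    redHom p n f = f.mapRange Int.cast Int.cast_zero := rfl

private lemma mem_IdF_redHom_iff {p : ℕ} [Fact p.Prime] {A : Type*} [NonUnitalRing A]
    [Module (ZMod p) A] {n : ℕ} (f : PZ n) :
    redHom p n f ∈ IdF (ZMod p) A n ↔ f ∈ IdZ A n := by
  show (∀ v : Fin (n + 1) → A, evalF (ZMod p) v _ = 0) ↔
    (∀ v : Fin (n + 1) → A, evalZ A v f = 0)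
  refine forall_congr' fun v => ?_
  rw [redHom_apply, evalF_mapRange]

/-- Reduction mod `p` induces an additive isomorphism
`P_n(ℤ)/Id(A,ℤ) ≃ P_n(𝔽_p)/Id(A,𝔽_p)`. -/
private noncomputable def quotEquivRed (p n : ℕ) [Fact p.Prime] (A : Type*) [NonUnitalRing A]
    [Module (ZMod p) A] :
    (PZ n ⧸ IdZ A n) ≃+ (PF (ZMod p) n ⧸ IdF (ZMod p) A n) := by
  haveI : NeZero p := ⟨(Fact.out : p.Prime).ne_zero⟩
  let φ : PZ n →+ (PF (ZMod p) n ⧸ IdF (ZMod p) A n) :=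
    ((IdF (ZMod p) A n).mkQ.toAddMonoidHom).comp (redHom p n)
  have hker : φ.ker = IdZ A n := by
    ext f
    rw [AddMonoidHom.mem_ker]
    show Submodule.Quotient.mk (redHom p n f) = 0 ↔ _
    rw [Submodule.Quotient.mk_eq_zero]
    exact mem_IdF_redHom_iff f
  have hsurj : Function.Surjective φ := by
    intro y
    obtain ⟨g, rfl⟩ := Submodule.mkQ_surjective _ y
    obtain ⟨f, rfl⟩ :=
      Finsupp.mapRange_surjective _ Int.cast_zero (ZMod.intCast_surjective) g
    exact ⟨f, rfl⟩
  exact (QuotientAddGroup.quotientAddEquivOfEq hker.symm).trans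
    (QuotientAddGroup.quotientKerEquivOfSurjective φ hsurj)

theorem stmt_2 (p : ℕ) [Fact p.Prime] (F A : Type) [Field F] [Ring A] [Algebra F A]
    [CharP F p] (n : ℕ) :
    ∃ h : ∀ x : PZ n ⧸ IdZ A n, p • x = 0,
      letI : Module (ZMod p) (PZ n ⧸ IdZ A n) := AddCommGroup.zmodModule h
      Module.Finite (ZMod p) (PZ n ⧸ IdZ A n) ∧
      Module.finrank F (PF F n ⧸ IdF F A n) ≤ Module.finrank (ZMod p) (PZ n ⧸ IdZ A n) ∧
      (∀ [Algebra (ZMod p) A],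
        Module.finrank (ZMod p) (PF (ZMod p) n ⧸ IdF (ZMod p) A n) =
          Module.finrank (ZMod p) (PZ n ⧸ IdZ A n)) := by
  classical
  have hA : ∀ a : A, p • a = 0 := fun a => by
    rw [← Nat.cast_smul_eq_nsmul F p a, CharP.cast_eq_zero F p, zero_smul]
  have hp : ∀ x : PZ n ⧸ IdZ A n, p • x = 0 := by
    intro x
    induction x using QuotientAddGroup.induction_on with
    | H f =>
      rw [← QuotientAddGroup.mk_nsmul, QuotientAddGroup.eq_zero_iff]
      intro v
      rw [map_nsmul, hA]
  refine ⟨hp, ?_, ?_, ?_⟩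
  · -- finiteness
    letI : Module (ZMod p) (PZ n ⧸ IdZ A n) := AddCommGroup.zmodModule hp
    letI : Algebra (ZMod p) F := ZMod.algebra F p
    letI : Algebra (ZMod p) A := Algebra.compHom A (algebraMap (ZMod p) F)
    haveI : Module.Finite (ZMod p) (PF (ZMod p) n) :=
      Module.Finite.equiv (Finsupp.linearEquivFunOnFinite (ZMod p) (ZMod p)
        (Equiv.Perm (Fin (n + 1)))).symm
    haveI : Module.Finite (ZMod p) (PF (ZMod p) n ⧸ IdF (ZMod p) A n) :=
      Module.Finite.of_surjective (IdF (ZMod p) A n).mkQ (Submodule.mkQ_surjective _)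
    have le := (quotEquivRed p n A).toLinearEquiv
      (fun c x => ZMod.map_smul (n := p) (quotEquivRed p n A).toAddMonoidHom c x)
    exact Module.Finite.equiv le.symm
  · -- inequality
    letI : Module (ZMod p) (PZ n ⧸ IdZ A n) := AddCommGroup.zmodModule hp
    letI : Algebra (ZMod p) F := ZMod.algebra F p
    letI : Algebra (ZMod p) A := Algebra.compHom A (algebraMap (ZMod p) F)
    haveI : IsScalarTower (ZMod p) F A := IsScalarTower.of_algebraMap_eq fun x => rfl
    have le := (quotEquivRed p n A).toLinearEquiv
      (fun c x => ZMod.map_smul (n := p) (quotEquivRed p n A).toAddMonoidHom c x)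
    calc finrank F (PF F n ⧸ IdF F A n)
        = finrank F (span F (Set.range (Wfam (B := A) n))) := finrank_quot_IdF A n
      _ ≤ finrank (ZMod p) (span (ZMod p) (Set.range (Wfam (B := A) n))) :=
          finrank_span_le_span (Set.finite_range _)
      _ = finrank (ZMod p) (PF (ZMod p) n ⧸ IdF (ZMod p) A n) := (finrank_quot_IdF A n).symm
      _ = finrank (ZMod p) (PZ n ⧸ IdZ A n) := le.symm.finrank_eq
  · -- equality over ZMod p
    intro inst
    letI : Module (ZMod p) (PZ n ⧸ IdZ A n) := AddCommGroup.zmodModule hp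
    have le := (quotEquivRed p n A).toLinearEquiv
      (fun c x => ZMod.map_smul (n := p) (quotEquivRed p n A).toAddMonoidHom c x)
    exact le.symm.finrank_eq
end

section
/- Let S be a commutative unital ring, UT_2(S) the ring of upper triangular 2×2 matrices over S, and n ≥ 2. Let f = [x_1,x_n,x_2,x_3,…,x_{n−1}] ∈ P_n(ℤ) be the left-normed long commutator, let τ = (1 n) ∈ S_n be the transposition exchanging 1 and n, and let S_n act on P_n(ℤ) by permuting variable indices (σ·x_i = x_{σ(i)}). Then Σ_{π ∈ S_n, π(n)=n} (π·f − (τπ)·f) − n·(n−2)!·f ∈ P_n(ℤ) ∩ Id(UT_2(S),ℤ); that is, b_{T_λ}a_{T_λ}·f ≡ n(n−2)!·f modulo the multilinear identities of UT_2(S), where a_{T_λ} and b_{T_λ} are the Young symmetrizers of the tableau of shape λ = (n−1,1) with first row 1,2,…,n−1 and second row n. -/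
/-- The free unital associative ring `ℤ⟨x_1, x_2, …⟩` on countably many
(0-indexed) variables. -/
abbrev FA : Type := FreeAlgebra ℤ ℕ

/-- The variable `x_{i+1}` (0-indexed: `X i`). -/
noncomputable def X (i : ℕ) : FA := FreeAlgebra.ι ℤ i

/-- `P_n(ℤ)`: the additive subgroup of `ℤ⟨X⟩` generated by the multilinear monomials
`x_{σ(1)} x_{σ(2)} ⋯ x_{σ(n)}`, `σ ∈ S_n` (variables 0-indexed). -/
noncomputable def Pn (n : ℕ) : AddSubgroup FA :=
  AddSubgroup.closure
    {w | ∃ σ : Equiv.Perm (Fin n), w = (List.ofFn fun i => X (σ i)).prod}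

/-- `Id(R, ℤ)` (inside the free algebra): the elements vanishing under every
substitution of elements of `R` for the variables. -/
noncomputable def IdA (R : Type*) [Ring R] : AddSubgroup FA where
  carrier := {f | ∀ v : ℕ → R, FreeAlgebra.lift ℤ v f = 0}
  zero_mem' := fun v => map_zero _
  add_mem' := fun hf hg v => by rw [map_add, hf v, hg v, add_zero]
  neg_mem' := fun hf v => by rw [map_neg, hf v, neg_zero]

/-- Left-normed iterated commutator: `commList a [b₁, …, b_k] = [a, b₁, …, b_k]`
(`commList a [] = a`), where `[a,b] = ab - ba`. -/
def commList {A : Type*} [NonUnitalRing A] : A → List A → A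
  | a, [] => a
  | a, b :: l => commList (a * b - b * a) l

/-- The left-normed long commutator `[x_{i₁}, …, x_{i_k}]` of a list of variable
indices (junk value `0` for the empty list). -/
noncomputable def lcWord : List ℕ → FA
  | [] => 0
  | a :: l => commList (X a) l

/-- `Γ_n(ℤ)`: the additive subgroup of `P_n(ℤ)` generated by the proper multilinear
polynomials: products `c₁ c₂ ⋯ c_r` of long commutators (each of length ≥ 2) in which
each of the `n` variables occurs exactly once. -/
noncomputable def Gamma (n : ℕ) : AddSubgroup FA :=
  AddSubgroup.closure
    {w | ∃ L : List (List (Fin n)),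
      (∀ l ∈ L, 2 ≤ l.length) ∧ L.flatten.Perm (List.finRange n) ∧
      w = (L.map fun l => lcWord (l.map Fin.val)).prod}

/-- The two-sided ideal of the (unital) ring `FA` generated by a set `S`:
the additive subgroup generated by all products `a * s * b`, `s ∈ S`. -/
noncomputable def tsIdeal (S : Set FA) : AddSubgroup FA :=
  AddSubgroup.closure {w | ∃ a s b : FA, s ∈ S ∧ w = a * s * b}

/-- Renaming of variables: the endomorphism of `FA` sending `x_i ↦ x_{π(i)}` for the
first `n` variables (and fixing the remaining ones), for `π ∈ S_n`. -/
noncomputable def rename {n : ℕ} (π : Equiv.Perm (Fin n)) : FA →ₐ[ℤ] FA :=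
  FreeAlgebra.lift ℤ (fun i => if h : i < n then X (π ⟨i, h⟩) else X i)

/-- The ring of upper triangular `2 × 2` matrices over `S`, as a subring of `M_2(S)`. -/
def UT2 (S : Type*) [CommRing S] : Subring (Matrix (Fin 2) (Fin 2) S) where
  carrier := {M | M 1 0 = 0}
  zero_mem' := rfl
  one_mem' := Matrix.one_apply_ne (by decide)
  add_mem' := by
    intro a b ha hb
    show (a + b) 1 0 = 0
    simp only [Matrix.add_apply]
    rw [ha, hb, add_zero]
  neg_mem' := by
    intro a ha
    show (-a) 1 0 = 0
    simp only [Matrix.neg_apply]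
    rw [ha, neg_zero]
  mul_mem' := by
    intro a b ha hb
    show (a * b) 1 0 = 0
    rw [Matrix.mul_apply, Fin.sum_univ_two, ha, hb, zero_mul, mul_zero, add_zero]

/-!
On upper triangular `2 × 2` matrices every commutator `[A, B]` is strictly upper triangular, and
for strictly upper triangular `C` one has `[C, B] = ε(B) C` with `ε(B) = B₂₂ - B₁₁`. Hence a long
commutator `[x_a, x_b, …]` containing every variable once takes the value
`Φ(a, b) = (∏_{k ≠ a, b} ε(u_k)) [u_a, u_b]`, which is antisymmetric in `a, b` and satisfies
`Φ(a, b) + Φ(b, c) + Φ(c, a) = 0` because of the matrix identity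
`ε(C) [A, B] + ε(A) [B, C] + ε(B) [C, A] = 0`. For `π` fixing `n`, the term `π·f - (τπ)·f` takes
the value `Φ(π(1), n) - Φ(τπ(1), 1)`, which is `2 Φ(1, n)` if `π(1) = 1` and `Φ(1, n)` otherwise.
Of the `(n-1)!` permutations fixing `n`, `(n-2)!` also fix `1`, so the sum is
`((n-1)! + (n-2)!) Φ(1, n) = n (n-2)! f(u)`.
-/

theorem map_commList {A B F : Type*} [Ring A] [Ring B] [FunLike F A B] [RingHomClass F A B]
    (φ : F) (a : A) (l : List A) : φ (commList a l) = commList (φ a) (l.map φ) := by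
  induction l generalizing a with
  | nil => rfl
  | cons b l ih => simp only [commList, ih, map_sub, map_mul, List.map_cons]

theorem commList_eq_prod_smul {R A : Type*} [CommRing R] [Ring A] [Algebra R A] (ε : A → R)
    {c : A} {l : List A} (h : ∀ b ∈ l, ⁅c, b⁆ = ε b • c) :
    commList c l = (l.map ε).prod • c := by
  induction l generalizing c with
  | nil => simp [commList]
  | cons b l ih =>
    have hb : c * b - b * c = ε b • c := by rw [← Ring.lie_def]; exact h b (by simp)
    have hl : ∀ b' ∈ l, ⁅ε b • c, b'⁆ = ε b' • ε b • c := by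
      intro b' hb'
      rw [Ring.lie_def, smul_mul_assoc, mul_smul_comm, ← smul_sub, ← Ring.lie_def,
        h b' (by simp [hb']), smul_comm]
    rw [commList, hb, ih hl, List.map_cons, List.prod_cons, mul_comm, mul_smul]

section UpperTriangular

variable {S : Type*} [CommRing S]

def diagDiff (A : Matrix (Fin 2) (Fin 2) S) : S := A 1 1 - A 0 0

theorem lie_lie_eq_diagDiff_smul {A B C : Matrix (Fin 2) (Fin 2) S}
    (hA : A 1 0 = 0) (hB : B 1 0 = 0) (hC : C 1 0 = 0) :
    ⁅⁅A, B⁆, C⁆ = diagDiff C • ⁅A, B⁆ := by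
  ext i j
  fin_cases i <;> fin_cases j <;>
    simp [Ring.lie_def, Matrix.mul_apply, Fin.sum_univ_two, diagDiff, hA, hB, hC] <;> ring

theorem diagDiff_smul_lie_cyclic {A B C : Matrix (Fin 2) (Fin 2) S}
    (hA : A 1 0 = 0) (hB : B 1 0 = 0) (hC : C 1 0 = 0) :
    diagDiff C • ⁅A, B⁆ + diagDiff A • ⁅B, C⁆ + diagDiff B • ⁅C, A⁆ = 0 := by
  ext i j
  fin_cases i <;> fin_cases j <;>
    simp [Ring.lie_def, Matrix.mul_apply, Fin.sum_univ_two, diagDiff, hA, hB, hC] <;> ring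

theorem commList_cons_eq_prod_smul_lie {A B : Matrix (Fin 2) (Fin 2) S}
    {l : List (Matrix (Fin 2) (Fin 2) S)} (hA : A 1 0 = 0) (hB : B 1 0 = 0)
    (hl : ∀ C ∈ l, C 1 0 = 0) :
    commList A (B :: l) = (l.map diagDiff).prod • ⁅A, B⁆ := by
  rw [commList, ← Ring.lie_def]
  exact commList_eq_prod_smul diagDiff fun C hC => lie_lie_eq_diagDiff_smul hA hB (hl C hC)

end UpperTriangular

section LongCommValue

variable {S ι : Type*} [CommRing S] [Fintype ι] [DecidableEq ι]

/-- `Φ(a, b)`: the value at `u` of any long commutator `[x_a, x_b, …]` in which every other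
variable occurs exactly once (see `lift_hookCommutator`). -/
def longCommValue (u : ι → Matrix (Fin 2) (Fin 2) S) (a b : ι) : Matrix (Fin 2) (Fin 2) S :=
  (∏ k ∈ {a, b}ᶜ, diagDiff (u k)) • ⁅u a, u b⁆

theorem longCommValue_swap (u : ι → Matrix (Fin 2) (Fin 2) S) (a b : ι) :
    longCommValue u b a = -longCommValue u a b := by
  rw [longCommValue, longCommValue, Finset.pair_comm, Ring.lie_def, Ring.lie_def, ← neg_sub,
    smul_neg]

theorem longCommValue_comp_perm (u : ι → Matrix (Fin 2) (Fin 2) S) (π : Equiv.Perm ι)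
    (a b : ι) : longCommValue (u ∘ π) a b = longCommValue u (π a) (π b) := by
  rw [longCommValue, longCommValue]
  congr 1
  exact Finset.prod_equiv π (by simp [π.injective.eq_iff]) (fun _ _ => rfl)

theorem longCommValue_cyclic {u : ι → Matrix (Fin 2) (Fin 2) S} (hu : ∀ k, u k 1 0 = 0)
    {a b c : ι} (hab : a ≠ b) (hbc : b ≠ c) (hca : c ≠ a) :
    longCommValue u a b + longCommValue u b c + longCommValue u c a = 0 := by
  set T : Finset ι := {a, b, c}ᶜ
  have hab' : ({a, b} : Finset ι)ᶜ = insert c T := by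
    ext k; simp only [T, Finset.mem_compl, Finset.mem_insert, Finset.mem_singleton]; grind
  have hbc' : ({b, c} : Finset ι)ᶜ = insert a T := by
    ext k; simp only [T, Finset.mem_compl, Finset.mem_insert, Finset.mem_singleton]; grind
  have hca' : ({c, a} : Finset ι)ᶜ = insert b T := by
    ext k; simp only [T, Finset.mem_compl, Finset.mem_insert, Finset.mem_singleton]; grind
  rw [longCommValue, longCommValue, longCommValue, hab', hbc', hca',
    Finset.prod_insert (by simp [T] : c ∉ T), Finset.prod_insert (by simp [T] : a ∉ T),
    Finset.prod_insert (by simp [T] : b ∉ T), mul_smul, mul_smul, mul_smul,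
    smul_comm (diagDiff (u c)), smul_comm (diagDiff (u a)), smul_comm (diagDiff (u b)),
    ← smul_add, ← smul_add, diagDiff_smul_lie_cyclic (hu a) (hu b) (hu c), smul_zero]

theorem longCommValue_sub_swap {u : ι → Matrix (Fin 2) (Fin 2) S} (hu : ∀ k, u k 1 0 = 0)
    {a b j : ι} (hab : a ≠ b) (hjb : j ≠ b) :
    longCommValue u j b - longCommValue u (Equiv.swap a b j) a =
      longCommValue u a b + if j = a then longCommValue u a b else 0 := by
  by_cases hja : j = a
  · rw [hja, Equiv.swap_apply_left, longCommValue_swap u a b, if_pos rfl, sub_neg_eq_add]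
  · have h := longCommValue_cyclic hu (Ne.symm hja) hjb hab.symm
    rw [longCommValue_swap u a b] at h
    rw [Equiv.swap_apply_of_ne_of_ne hja hjb, if_neg hja, add_zero, longCommValue_swap u a j,
      ← sub_eq_zero, ← h]
    abel

end LongCommValue

open Finset Nat in
theorem card_perm_fixing {α : Type*} [Fintype α] [DecidableEq α] (s : Finset α) :
    #{π : Equiv.Perm α | ∀ a ∈ s, π a = a} = (Fintype.card α - #s)! := by
  rw [← Fintype.card_subtype, ← Finset.card_compl, ← Fintype.card_coe, ← Fintype.card_perm]
  refine Fintype.card_congr ((Equiv.Perm.subtypeEquivSubtypePerm (· ∈ sᶜ)).trans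
    (Equiv.subtypeEquivRight fun π => ?_)).symm
  simp

open Finset Nat in
theorem sum_longCommValue_sub_swap {S ι : Type*} [CommRing S] [Fintype ι] [DecidableEq ι]
    {u : ι → Matrix (Fin 2) (Fin 2) S} (hu : ∀ k, u k 1 0 = 0) {a b : ι} (hab : a ≠ b) :
    ∑ π : Equiv.Perm ι with π b = b,
        (longCommValue u (π a) b - longCommValue u (Equiv.swap a b (π a)) a) =
      ((Fintype.card ι - 1)! + (Fintype.card ι - 2)!) • longCommValue u a b := by
  have hfix : ∀ π : Equiv.Perm ι, π b = b → π a ≠ b := fun π hπ h =>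
    hab (π.injective (h.trans hπ.symm))
  rw [sum_congr rfl fun π hπ => longCommValue_sub_swap hu hab (hfix π (mem_filter.1 hπ).2),
    sum_add_distrib, sum_ite, sum_const_zero, add_zero, sum_const, sum_const, filter_filter,
    add_smul]
  congr 2
  · simpa using card_perm_fixing {b}
  · rw [← card_pair hab, ← card_perm_fixing]
    congr 1
    ext π
    simp [and_comm]

theorem rename_X_val {N : ℕ} (π : Equiv.Perm (Fin N)) (k : Fin N) :
    rename π (X k) = X (π k) := by
  simp [rename, X]

theorem lift_rename {A : Type*} [Semiring A] [Algebra ℤ A] (v : ℕ → A) {N : ℕ}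
    (π : Equiv.Perm (Fin N)) (g : FA) :
    FreeAlgebra.lift ℤ v (rename π g) =
      FreeAlgebra.lift ℤ (fun i => FreeAlgebra.lift ℤ v (rename π (X i))) g := by
  rw [← AlgHom.comp_apply, ← FreeAlgebra.lift_comp_ι ((FreeAlgebra.lift ℤ v).comp (rename π))]
  rfl

theorem mem_IdA_UT2 {S : Type*} [CommRing S] {g : FA}
    (h : ∀ v : ℕ → Matrix (Fin 2) (Fin 2) S, (∀ i, v i 1 0 = 0) → FreeAlgebra.lift ℤ v g = 0) :
    g ∈ IdA (UT2 S) := by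
  intro v
  let φ : UT2 S →ₐ[ℤ] Matrix (Fin 2) (Fin 2) S := (UT2 S).subtype.toIntAlgHom
  have hφ : φ.comp (FreeAlgebra.lift ℤ v) = FreeAlgebra.lift ℤ (φ ∘ v) :=
    FreeAlgebra.hom_ext (by ext1 i; simp)
  apply Subtype.val_injective
  change φ _ = 0
  rw [← AlgHom.comp_apply, hφ]
  exact h _ fun i => (v i).2

theorem rename_mem_Pn {N : ℕ} (π : Equiv.Perm (Fin N)) {g : FA} (hg : g ∈ Pn N) :
    rename π g ∈ Pn N := by
  refine (AddSubgroup.closure_le ((Pn N).comap (rename π).toAddMonoidHom)).2 ?_ hg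
  rintro _ ⟨σ, rfl⟩
  refine AddSubgroup.subset_closure ⟨π * σ, ?_⟩
  simp [map_list_prod, List.map_ofFn, Function.comp_def, rename_X_val]

theorem exists_perm_ofFn_eq {N : ℕ} {l : List ℕ} (h : l.Perm (List.range N)) :
    ∃ σ : Equiv.Perm (Fin N), List.ofFn (fun i => (σ i : ℕ)) = l := by
  obtain rfl : l.length = N := by simpa using h.length_eq
  have hnd : l.Nodup := h.nodup_iff.2 List.nodup_range
  have hlt : ∀ i : Fin l.length, l.get i < l.length := fun i => by
    simpa using h.subset (l.get_mem i)
  have hinj : Function.Injective fun i : Fin l.length => (⟨l.get i, hlt i⟩ : Fin l.length) :=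
    fun i j hij => hnd.get_inj_iff.1 (Fin.ext_iff.1 hij)
  exact ⟨Equiv.ofBijective _ hinj.bijective_of_finite, List.ofFn_get l⟩

noncomputable def multilinearSpan (u : List ℕ) : AddSubgroup FA :=
  AddSubgroup.closure {w | ∃ l : List ℕ, l.Perm u ∧ w = (l.map X).prod}

theorem multilinearSpan_congr {u u' : List ℕ} (h : u.Perm u') :
    multilinearSpan u = multilinearSpan u' := by
  unfold multilinearSpan
  congr 1
  ext w
  exact ⟨fun ⟨l, hl, e⟩ => ⟨l, hl.trans h, e⟩, fun ⟨l, hl, e⟩ => ⟨l, hl.trans h.symm, e⟩⟩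

theorem X_mem_multilinearSpan (a : ℕ) : X a ∈ multilinearSpan [a] :=
  AddSubgroup.subset_closure ⟨[a], List.Perm.refl _, by simp⟩

theorem mul_mem_multilinearSpan {u u' : List ℕ} {m m' : FA} (hm : m ∈ multilinearSpan u)
    (hm' : m' ∈ multilinearSpan u') : m * m' ∈ multilinearSpan (u ++ u') := by
  induction hm using AddSubgroup.closure_induction with
  | mem x hx =>
    obtain ⟨l, hl, rfl⟩ := hx
    induction hm' using AddSubgroup.closure_induction with
    | mem y hy =>
      obtain ⟨l', hl', rfl⟩ := hy
      exact AddSubgroup.subset_closure ⟨l ++ l', hl.append hl', by simp⟩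
    | zero => simp
    | add _ _ _ _ h₁ h₂ => rw [mul_add]; exact add_mem h₁ h₂
    | neg _ _ h => rw [mul_neg]; exact neg_mem h
  | zero => simp
  | add _ _ _ _ h₁ h₂ => rw [add_mul]; exact add_mem h₁ h₂
  | neg _ _ h => rw [neg_mul]; exact neg_mem h

theorem commList_mem_multilinearSpan {u : List ℕ} {m : FA} (hm : m ∈ multilinearSpan u)
    (t : List ℕ) : commList m (t.map X) ∈ multilinearSpan (u ++ t) := by
  induction t generalizing u m with
  | nil => simpa [commList] using hm
  | cons b t ih =>
    have hb := X_mem_multilinearSpan b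
    have hbu : multilinearSpan ([b] ++ u) = multilinearSpan (u ++ [b]) :=
      multilinearSpan_congr List.perm_append_comm
    rw [List.map_cons, commList, List.append_cons]
    exact ih (sub_mem (mul_mem_multilinearSpan hm hb) (hbu ▸ mul_mem_multilinearSpan hb hm))

theorem multilinearSpan_range_le_Pn (N : ℕ) : multilinearSpan (List.range N) ≤ Pn N := by
  refine (AddSubgroup.closure_le _).2 ?_
  rintro _ ⟨l, hl, rfl⟩
  obtain ⟨σ, rfl⟩ := exists_perm_ofFn_eq hl
  exact AddSubgroup.subset_closure ⟨σ, by simp [List.map_ofFn, Function.comp_def]⟩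

theorem prod_map_range_succ_eq_prod_compl {M : Type*} [CommMonoid M] (n : ℕ) (g : ℕ → M) :
    ((List.range n).map fun i => g (i + 1)).prod =
      ∏ k ∈ ({0, Fin.last (n + 1)}ᶜ : Finset (Fin (n + 2))), g k := by
  rw [← List.map_coe_finRange_eq_range, List.map_map, ← List.ofFn_eq_map, List.prod_ofFn]
  refine Finset.prod_bij (fun i _ => i.castSucc.succ) (fun i _ => ?_) (fun i _ j _ h => ?_)
    (fun k hk => ?_) (fun i _ => rfl)
  · simp [Fin.ext_iff, Fin.val_last, i.isLt.ne]
  · simpa [Fin.ext_iff] using h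
  · simp only [Finset.mem_compl, Finset.mem_insert, Finset.mem_singleton, not_or,
      Fin.ext_iff, Fin.val_zero, Fin.val_last] at hk
    exact ⟨⟨k - 1, by omega⟩, Finset.mem_univ _, Fin.ext (by simp; omega)⟩

noncomputable def hookCommutator (n : ℕ) : FA :=
  commList (X 0) (X (n + 1) :: (List.range n).map fun i => X (i + 1))

theorem lift_hookCommutator {S : Type*} [CommRing S] {w : ℕ → Matrix (Fin 2) (Fin 2) S}
    (hw : ∀ i, w i 1 0 = 0) (n : ℕ) :
    FreeAlgebra.lift ℤ w (hookCommutator n) =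
      longCommValue (fun k : Fin (n + 2) => w k) 0 (Fin.last (n + 1)) := by
  rw [hookCommutator, map_commList]
  simp only [X, FreeAlgebra.lift_ι_apply, List.map_cons, List.map_map, Function.comp_def]
  rw [commList_cons_eq_prod_smul_lie (hw 0) (hw _) (by simp [hw]), longCommValue, List.map_map]
  exact congrArg (· • _) (prod_map_range_succ_eq_prod_compl n (diagDiff ∘ w))

theorem lift_rename_hookCommutator {S : Type*} [CommRing S] {v : ℕ → Matrix (Fin 2) (Fin 2) S}
    (hv : ∀ i, v i 1 0 = 0) {n : ℕ} (π : Equiv.Perm (Fin (n + 2))) :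
    FreeAlgebra.lift ℤ v (rename π (hookCommutator n)) =
      longCommValue (fun k : Fin (n + 2) => v k) (π 0) (π (Fin.last (n + 1))) := by
  have hw : ∀ i, FreeAlgebra.lift ℤ v (rename π (X i)) 1 0 = 0 := by
    intro i
    simp only [rename, X, FreeAlgebra.lift_ι_apply]
    split <;> simp [hv]
  rw [lift_rename, lift_hookCommutator hw, ← longCommValue_comp_perm]
  congr 1
  ext1 k
  rw [Function.comp_apply, rename_X_val]
  exact FreeAlgebra.lift_ι_apply _ _

theorem hookCommutator_mem_Pn (n : ℕ) : hookCommutator n ∈ Pn (n + 2) := by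
  have hperm : ([0] ++ ((n + 1) :: (List.range n).map (· + 1))).Perm (List.range (n + 2)) := by
    rw [List.range_succ, List.range_succ_eq_map]
    exact List.Perm.cons 0 (List.perm_append_singleton _ _).symm
  refine multilinearSpan_range_le_Pn _ ?_
  rw [← multilinearSpan_congr hperm]
  simpa [hookCommutator, List.map_map, Function.comp_def] using
    commList_mem_multilinearSpan (X_mem_multilinearSpan 0) ((n + 1) :: (List.range n).map (· + 1))

open Finset in
theorem stmt_14 (S : Type) [CommRing S] (n : ℕ) :
    -- `N = n + 2` plays the role of the `n ≥ 2` of the statement; variables are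
    -- 0-indexed, so `f = [x_1, x_n, x_2, …, x_{n-1}]` is
    -- `commList (X 0) (X (n+1) :: [X 1, …, X n])` and `τ = (1 n)` is `swap 0 (N-1)`.
    (∑ π ∈ univ.filter
        (fun π : Equiv.Perm (Fin (n + 2)) => π (Fin.last (n + 1)) = Fin.last (n + 1)),
        (rename π (commList (X 0) (X (n + 1) :: (List.range n).map fun i => X (i + 1))) -
          rename (Equiv.swap 0 (Fin.last (n + 1)) * π)
            (commList (X 0) (X (n + 1) :: (List.range n).map fun i => X (i + 1))))) -
      (((n : ℤ) + 2) * (n.factorial : ℤ)) •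
        commList (X 0) (X (n + 1) :: (List.range n).map fun i => X (i + 1)) ∈
      Pn (n + 2) ⊓ IdA (UT2 S) := by
  rw [← hookCommutator]
  have hf := hookCommutator_mem_Pn n
  refine AddSubgroup.mem_inf.2 ⟨sub_mem (sum_mem fun π _ =>
    sub_mem (rename_mem_Pn _ hf) (rename_mem_Pn _ hf)) (zsmul_mem hf _), ?_⟩
  refine mem_IdA_UT2 fun v hv => ?_
  have hterm : ∀ π ∈ univ.filter fun π : Equiv.Perm (Fin (n + 2)) =>
      π (Fin.last (n + 1)) = Fin.last (n + 1),
      FreeAlgebra.lift ℤ v (rename π (hookCommutator n) -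
          rename (Equiv.swap 0 (Fin.last (n + 1)) * π) (hookCommutator n)) =
        longCommValue (fun k : Fin (n + 2) => v k) (π 0) (Fin.last (n + 1)) -
          longCommValue (fun k : Fin (n + 2) => v k)
            (Equiv.swap 0 (Fin.last (n + 1)) (π 0)) 0 := by
    intro π hπ
    rw [map_sub, lift_rename_hookCommutator hv, lift_rename_hookCommutator hv,
      Equiv.Perm.mul_apply, Equiv.Perm.mul_apply, (mem_filter.1 hπ).2, Equiv.swap_apply_right]
  rw [map_sub, map_sum, map_zsmul, lift_hookCommutator hv, sum_congr rfl hterm,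
    sum_longCommValue_sub_swap (fun k : Fin (n + 2) => hv k) Fin.last_pos.ne, Fintype.card_fin,
    sub_eq_zero, ← natCast_zsmul]
  congr 1
  push_cast [Nat.factorial_succ]
  ring
end
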